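/- For every n ≥ 3, there is an n-state DFA M over {0,1} such that the minimal DFA for fact(L(M)) has exactly 2^(n−1) states. Specifically, take states {0,...,n-1}, start state 0, final set {0}, δ(q,0)=q for 0 ≤ q < n-2, δ(n-2,0)=δ(n-1,0)=n-1, δ(q,1)=q+1 for 0 ≤ q < n-2, δ(n-2,1)=0, δ(n-1,1)=n-1. -/

import Mathlib

/-!
Call the states `0, …, n-2` live and `n-1` dead. The dead state is a trap, and every live state
is reachable from `0` and leads back to `0` along `1`s, so a word is a factor of `L(M)` iff it
leads some live state to a live state. Hence `fact(L(M))` is recognised by the subset automaton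
on sets of live states that starts from the full set and accepts the nonempty sets; it has
`2^(n-1)` states. It is minimal: `1` rotates the live states cyclically and `0` deletes the state
`n-2`, so any single live state can be deleted. Thus every set is reachable from the full set, and
two sets differing at `t` are separated by deleting all states but `t`.
-/

/-- The DFA of Theorem `subword`: states `{0,…,n-1}`, start `0`, final set `{0}`, with
`δ(q,0) = q` for `0 ≤ q < n-2`, `δ(n-2,0) = δ(n-1,0) = n-1`,
`δ(q,1) = q+1` for `0 ≤ q < n-2`, `δ(n-2,1) = 0`, and `δ(n-1,1) = n-1`. -/
def factWitnessDFA (n : ℕ) [NeZero n] : DFA (Fin 2) (Fin n) where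
  step q a :=
    if a = 0 then
      (if q.val + 2 < n then q else -1)
    else
      (if q.val + 2 < n then q + 1 else if q.val + 2 = n then 0 else -1)
  start := 0
  accept := {0}

open Function Set

namespace Language

variable {α : Type*}

def factors (L : Language α) : Language α := {v | ∃ u w, u ++ v ++ w ∈ L}

end Language

namespace DFA

variable {α σ τ : Type*}

theorem card_le_card_of_accepts_eq [Fintype σ] [Fintype τ] {M : DFA α σ} {P : DFA α τ}
    (hreach : Surjective P.eval) (hdist : Injective P.acceptsFrom) (h : M.accepts = P.accepts) :
    Fintype.card τ ≤ Fintype.card σ := by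
  have hquot (x : List α) : M.acceptsFrom (M.eval x) = P.acceptsFrom (P.eval x) := by
    rw [← Language.leftQuotient_accepts_apply, ← Language.leftQuotient_accepts_apply, h]
  refine Fintype.card_le_of_injective (M.eval ∘ surjInv hreach) fun S S' hSS' => hdist ?_
  rw [← surjInv_eq hreach S, ← surjInv_eq hreach S', ← hquot, ← hquot]
  exact congrArg M.acceptsFrom hSS'

section LiveSubset

variable (M : DFA α σ) (e : τ ↪ σ)

def liveSubsetDFA : DFA α (Set τ) where
  step S a := {t | ∃ s ∈ S, M.step (e s) a = e t}
  start := univ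
  accept := {S | S.Nonempty}

variable {M e}

theorem mem_range_of_evalFrom_mem_range (htrap : ∀ q a, M.step q a ∈ range e → q ∈ range e)
    {q : σ} {v : List α} (h : M.evalFrom q v ∈ range e) : q ∈ range e := by
  induction v generalizing q with
  | nil => exact h
  | cons a v ih => exact htrap q a (ih h)

theorem evalFrom_liveSubsetDFA (htrap : ∀ q a, M.step q a ∈ range e → q ∈ range e)
    (S : Set τ) (v : List α) :
    (M.liveSubsetDFA e).evalFrom S v = {t | ∃ s ∈ S, M.evalFrom (e s) v = e t} := by
  induction v generalizing S with
  | nil => simp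
  | cons a v ih =>
    rw [evalFrom_cons, ih]
    ext t
    simp only [evalFrom_cons]
    constructor
    · rintro ⟨s', ⟨s, hs, hss'⟩, hs't⟩
      exact ⟨s, hs, hss' ▸ hs't⟩
    · rintro ⟨s, hs, hst⟩
      obtain ⟨s', hs'⟩ := mem_range_of_evalFrom_mem_range htrap ⟨t, hst.symm⟩
      exact ⟨s', ⟨s, hs, hs'.symm⟩, hs' ▸ hst⟩

theorem accepts_liveSubsetDFA (htrap : ∀ q a, M.step q a ∈ range e → q ∈ range e) :
    (M.liveSubsetDFA e).accepts = {v | ∃ s t, M.evalFrom (e s) v = e t} := by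
  ext v
  rw [mem_accepts, eval, evalFrom_liveSubsetDFA htrap]
  exact ⟨fun ⟨t, s, _, h⟩ => ⟨s, t, h⟩, fun ⟨s, t, h⟩ => ⟨t, s, mem_univ s, h⟩⟩

theorem factors_accepts (htrap : ∀ q a, M.step q a ∈ range e → q ∈ range e)
    (haccept : M.accept ⊆ range e) (hreach : ∀ s, ∃ u, M.eval u = e s)
    (hcoreach : ∀ t, ∃ w, M.evalFrom (e t) w ∈ M.accept) :
    M.accepts.factors = {v | ∃ s t, M.evalFrom (e s) v = e t} := by
  ext v
  constructor
  · rintro ⟨u, w, huvw⟩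
    rw [mem_accepts, eval, evalFrom_of_append, evalFrom_of_append] at huvw
    obtain ⟨t, ht⟩ := mem_range_of_evalFrom_mem_range htrap (haccept huvw)
    obtain ⟨s, hs⟩ := mem_range_of_evalFrom_mem_range htrap ⟨t, ht⟩
    exact ⟨s, t, hs ▸ ht.symm⟩
  · rintro ⟨s, t, hst⟩
    obtain ⟨u, hu⟩ := hreach s
    obtain ⟨w, hw⟩ := hcoreach t
    refine ⟨u, w, ?_⟩
    rwa [mem_accepts, eval, evalFrom_of_append, evalFrom_of_append, ← eval, hu, hst]

end LiveSubset

end DFA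

open DFA Fin.NatCast

variable {k : ℕ}

theorem factWitnessDFA_step_castSucc_zero (s : Fin (k + 1)) :
    (factWitnessDFA (k + 2)).step s.castSucc 0 =
      if s = Fin.last k then Fin.last (k + 1) else s.castSucc := by
  simp only [factWitnessDFA, if_true]
  split_ifs <;> simp only [Fin.ext_iff, Fin.val_castSucc, Fin.coe_neg_one, Fin.val_last] at * <;>
    omega

theorem factWitnessDFA_step_castSucc_one (s : Fin (k + 1)) :
    (factWitnessDFA (k + 2)).step s.castSucc 1 = (s + 1).castSucc := by
  simp only [factWitnessDFA, one_ne_zero, if_false]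
  split_ifs <;> simp only [Fin.ext_iff, Fin.val_castSucc, Fin.val_add_one, Fin.val_zero,
    Fin.val_last] at * <;> split_ifs at * <;> omega

theorem factWitnessDFA_step_last (a : Fin 2) :
    (factWitnessDFA (k + 2)).step (Fin.last (k + 1)) a = Fin.last (k + 1) := by
  simp only [factWitnessDFA]
  split_ifs <;> simp only [Fin.ext_iff, Fin.coe_neg_one, Fin.val_last] at * <;> omega

theorem factWitnessDFA_mem_range_of_step_mem_range (q : Fin (k + 2)) (a : Fin 2)
    (h : (factWitnessDFA (k + 2)).step q a ∈ range Fin.castSuccEmb) :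
    q ∈ range Fin.castSuccEmb := by
  induction q using Fin.lastCases with
  | last =>
    rw [factWitnessDFA_step_last] at h
    obtain ⟨s, hs⟩ := h
    exact absurd hs (Fin.castSucc_ne_last s)
  | cast s => exact ⟨s, rfl⟩

theorem factWitnessDFA_evalFrom_replicate_one (s : Fin (k + 1)) (r : ℕ) :
    (factWitnessDFA (k + 2)).evalFrom s.castSucc (List.replicate r 1) = (s + r).castSucc := by
  induction r generalizing s with
  | zero => simp
  | succ r ih =>
    rw [List.replicate_succ, evalFrom_cons, factWitnessDFA_step_castSucc_one, ih, Nat.cast_succ,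
      add_right_comm, add_assoc]

def factWitnessSubsetDFA (k : ℕ) : DFA (Fin 2) (Set (Fin (k + 1))) :=
  (factWitnessDFA (k + 2)).liveSubsetDFA Fin.castSuccEmb

theorem factWitnessSubsetDFA_step_zero (S : Set (Fin (k + 1))) :
    (factWitnessSubsetDFA k).step S 0 = S \ {Fin.last k} := by
  ext t
  simp only [factWitnessSubsetDFA, liveSubsetDFA, Fin.coe_castSuccEmb,
    factWitnessDFA_step_castSucc_zero, mem_ofPred_eq, mem_sdiff, mem_singleton_iff]
  constructor
  · rintro ⟨s, hs, hst⟩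
    split_ifs at hst with hlast
    · exact absurd hst.symm (Fin.castSucc_ne_last t)
    · obtain rfl := Fin.castSucc_injective _ hst
      exact ⟨hs, hlast⟩
  · rintro ⟨ht, hlast⟩
    exact ⟨t, ht, if_neg hlast⟩

theorem factWitnessSubsetDFA_step_one (S : Set (Fin (k + 1))) :
    (factWitnessSubsetDFA k).step S 1 = {t | t - 1 ∈ S} := by
  ext t
  simp only [factWitnessSubsetDFA, liveSubsetDFA, Fin.coe_castSuccEmb,
    factWitnessDFA_step_castSucc_one, Fin.castSucc_inj, mem_ofPred_eq, ← eq_sub_iff_add_eq,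
    exists_eq_right]

theorem mem_factWitnessSubsetDFA_evalFrom_replicate_one {S : Set (Fin (k + 1))} {t : Fin (k + 1)}
    {r : ℕ} : t ∈ (factWitnessSubsetDFA k).evalFrom S (List.replicate r 1) ↔ t - r ∈ S := by
  induction r generalizing S with
  | zero => simp
  | succ r ih =>
    rw [List.replicate_succ, evalFrom_cons, ih, factWitnessSubsetDFA_step_one, mem_ofPred_eq,
      Nat.cast_succ, sub_sub]

/-- Rotate `t` to the last live state, where `0` kills it, then rotate back. -/
def eraseWord (t : Fin (k + 1)) : List (Fin 2) :=
  List.replicate (Fin.last k - t).val 1 ++ 0 :: List.replicate (t - Fin.last k).val 1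

theorem factWitnessSubsetDFA_evalFrom_eraseWord (S : Set (Fin (k + 1))) (t : Fin (k + 1)) :
    (factWitnessSubsetDFA k).evalFrom S (eraseWord t) = S \ {t} := by
  ext x
  rw [eraseWord, evalFrom_of_append, evalFrom_cons,
    mem_factWitnessSubsetDFA_evalFrom_replicate_one, factWitnessSubsetDFA_step_zero, mem_sdiff,
    mem_factWitnessSubsetDFA_evalFrom_replicate_one,
    Fin.cast_val_eq_self, Fin.cast_val_eq_self, mem_singleton_iff, mem_sdiff, mem_singleton_iff,
    sub_eq_iff_eq_add (c := Fin.last k), add_sub_cancel,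
    show x - (t - Fin.last k) - (Fin.last k - t) = x by abel]

theorem factWitnessSubsetDFA_evalFrom_flatMap_eraseWord (S : Set (Fin (k + 1)))
    (l : List (Fin (k + 1))) :
    (factWitnessSubsetDFA k).evalFrom S (l.flatMap eraseWord) = S \ {t | t ∈ l} := by
  induction l generalizing S with
  | nil => simp
  | cons t l ih =>
    rw [List.flatMap_cons, evalFrom_of_append, factWitnessSubsetDFA_evalFrom_eraseWord, ih,
      sdiff_sdiff]
    congr 1
    ext x
    simp

theorem factWitnessSubsetDFA_eval_surjective : Surjective (factWitnessSubsetDFA k).eval := by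
  intro S
  refine ⟨(Set.toFinite Sᶜ).toFinset.toList.flatMap eraseWord, ?_⟩
  rw [DFA.eval, factWitnessSubsetDFA_evalFrom_flatMap_eraseWord]
  ext t
  simp [factWitnessSubsetDFA, liveSubsetDFA]

theorem factWitnessSubsetDFA_acceptsFrom_injective :
    Injective (factWitnessSubsetDFA k).acceptsFrom := by
  intro S S' h
  ext t
  have key (T : Set (Fin (k + 1))) :
      ((Finset.univ.erase t).toList.flatMap eraseWord ∈ (factWitnessSubsetDFA k).acceptsFrom T) ↔
        t ∈ T := by
    rw [mem_acceptsFrom, factWitnessSubsetDFA_evalFrom_flatMap_eraseWord]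
    simp [factWitnessSubsetDFA, liveSubsetDFA, Set.Nonempty]
  rw [← key, h, key]

theorem factWitnessSubsetDFA_accepts :
    (factWitnessSubsetDFA k).accepts = (factWitnessDFA (k + 2)).accepts.factors := by
  rw [factWitnessSubsetDFA, accepts_liveSubsetDFA factWitnessDFA_mem_range_of_step_mem_range,
    factors_accepts factWitnessDFA_mem_range_of_step_mem_range]
  case haccept =>
    rintro q rfl
    exact ⟨0, rfl⟩
  case hreach =>
    intro s
    refine ⟨List.replicate s.val 1, ?_⟩
    rw [DFA.eval, show (factWitnessDFA (k + 2)).start = (0 : Fin (k + 1)).castSucc from rfl,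
      factWitnessDFA_evalFrom_replicate_one, Fin.cast_val_eq_self, zero_add, Fin.coe_castSuccEmb]
  case hcoreach =>
    intro t
    refine ⟨List.replicate (-t).val 1, ?_⟩
    rw [Fin.coe_castSuccEmb, factWitnessDFA_evalFrom_replicate_one, Fin.cast_val_eq_self,
      add_neg_cancel]
    rfl

theorem fact_state_complexity_tight (n : ℕ) [NeZero n] (hn : 3 ≤ n) :
    (∃ (τ : Type) (_ : Fintype τ) (D' : DFA (Fin 2) τ),
        D'.accepts =
          {v : List (Fin 2) | ∃ u w, u ++ v ++ w ∈ (factWitnessDFA n).accepts} ∧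
        Fintype.card τ = 2 ^ (n - 1)) ∧
    (∀ (τ : Type) (_ : Fintype τ) (D' : DFA (Fin 2) τ),
        D'.accepts =
          {v : List (Fin 2) | ∃ u w, u ++ v ++ w ∈ (factWitnessDFA n).accepts} →
        2 ^ (n - 1) ≤ Fintype.card τ) := by
  obtain ⟨k, rfl⟩ : ∃ k, n = k + 2 := ⟨n - 2, by omega⟩
  have hcard : Fintype.card (Set (Fin (k + 1))) = 2 ^ (k + 2 - 1) := by simp
  refine ⟨⟨_, inferInstance, factWitnessSubsetDFA k, factWitnessSubsetDFA_accepts, hcard⟩,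
    fun τ _ D hD => hcard ▸ card_le_card_of_accepts_eq factWitnessSubsetDFA_eval_surjective
      factWitnessSubsetDFA_acceptsFrom_injective (hD.trans factWitnessSubsetDFA_accepts.symm)⟩
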